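/- arXiv:1603.05620 — 2 statements merged into one kernel-verified Lean document; each statement's English description precedes it below -/
import Mathlib

section
/- Let p ≥ n and let A, B ∈ M_n(ℂ) be positive semidefinite. Let ι : M_n(ℂ) → M_p(ℂ) embed a matrix into the top-left n×n block (with zeros elsewhere), and let H be a Haar-random p×p unitary matrix. Then E_H ‖ι(A) H ι(B)‖² ≤ (n²/p) ‖A‖² ‖B‖², where ‖·‖ denotes the operator norm. -/
open Matrix MeasureTheory
open scoped ComplexOrder

noncomputable instance matrixMeasurableSpace {p : ℕ} : MeasurableSpace (Matrix (Fin p) (Fin p) ℂ) :=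
  MeasurableSpace.pi

/-- The operator norm (largest singular value) of a square complex matrix. -/
noncomputable def opNorm {n : ℕ} (A : Matrix (Fin n) (Fin n) ℂ) : ℝ :=
  ‖Matrix.toEuclideanCLM (𝕜 := ℂ) A‖

/-- The embedding of an `n×n` matrix into the top-left block of a `p×p` matrix. -/
def iotaM {n p : ℕ} (_h : n ≤ p) (A : Matrix (Fin n) (Fin n) ℂ) :
    Matrix (Fin p) (Fin p) ℂ :=
  Matrix.of fun i j =>
    if hi : (i : ℕ) < n then if hj : (j : ℕ) < n then A ⟨i, hi⟩ ⟨j, hj⟩ else 0 else 0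

open Finset
open scoped Matrix.Norms.L2Operator

lemma opNorm_eq {n : ℕ} (A : Matrix (Fin n) (Fin n) ℂ) : opNorm A = ‖A‖ := rfl

lemma sum_dite_lt {M : Type*} [AddCommMonoid M] {n p : ℕ} (hnp : n ≤ p) (g : Fin n → M) :
    (∑ i : Fin p, if h : (i : ℕ) < n then g ⟨i, h⟩ else 0) = ∑ i : Fin n, g i := by
  classical
  symm
  calc ∑ i : Fin n, g i
      = ∑ i ∈ univ.map (Fin.castLEEmb hnp),
          (if h : (i : ℕ) < n then g ⟨i, h⟩ else 0) := by
        rw [Finset.sum_map]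
        refine Finset.sum_congr rfl fun x _ => ?_
        have hx : (((Fin.castLEEmb hnp) x : Fin p) : ℕ) < n := x.isLt
        rw [dif_pos hx]
        congr 1
    _ = ∑ i : Fin p, (if h : (i : ℕ) < n then g ⟨i, h⟩ else 0) := by
        refine Finset.sum_subset (subset_univ _) fun x _ hx => ?_
        rw [dif_neg]
        intro hlt
        exact hx (Finset.mem_map.mpr ⟨⟨x, hlt⟩, mem_univ _, by ext; rfl⟩)

lemma iotaM_mul {n p : ℕ} (hnp : n ≤ p) (A B : Matrix (Fin n) (Fin n) ℂ) :
    iotaM hnp A * iotaM hnp B = iotaM hnp (A * B) := by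
  ext i j
  rw [Matrix.mul_apply]
  simp only [iotaM, Matrix.of_apply]
  by_cases hi : (i : ℕ) < n
  · simp only [dif_pos hi]
    by_cases hj : (j : ℕ) < n
    · simp only [dif_pos hj, Matrix.mul_apply]
      rw [← sum_dite_lt hnp (fun k => A ⟨i, hi⟩ k * B k ⟨j, hj⟩)]
      refine Finset.sum_congr rfl fun k _ => ?_
      by_cases hk : (k : ℕ) < n
      · simp only [dif_pos hk]
      · simp only [dif_neg hk, zero_mul]
    · simp only [dif_neg hj]
      refine Finset.sum_eq_zero fun k _ => ?_
      by_cases hk : (k : ℕ) < n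
      · simp only [dif_pos hk, mul_zero]
      · simp only [dif_neg hk, zero_mul]
  · simp only [dif_neg hi]
    exact Finset.sum_eq_zero fun k _ => zero_mul _

lemma iotaM_one_apply {n p : ℕ} (hnp : n ≤ p) (i k : Fin p) :
    iotaM hnp (1 : Matrix (Fin n) (Fin n) ℂ) i k
      = if ((i : ℕ) < n ∧ i = k) then 1 else 0 := by
  simp only [iotaM, Matrix.of_apply]
  by_cases hi : (i : ℕ) < n
  · by_cases hk : (k : ℕ) < n
    · rw [dif_pos hi, dif_pos hk, Matrix.one_apply]
      by_cases he : i = k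
      · rw [if_pos (show (⟨(i : ℕ), hi⟩ : Fin n) = ⟨(k : ℕ), hk⟩ by subst he; rfl),
          if_pos ⟨hi, he⟩]
      · rw [if_neg (show ¬(⟨(i : ℕ), hi⟩ : Fin n) = ⟨(k : ℕ), hk⟩ from
            fun hc => he (Fin.ext (show (i : ℕ) = (k : ℕ) by simpa using hc))),
          if_neg (fun hc : (i : ℕ) < n ∧ i = k => he hc.2)]
    · rw [dif_pos hi, dif_neg hk, if_neg (fun hc : (i : ℕ) < n ∧ i = k => hk (hc.2 ▸ hc.1))]
  · rw [dif_neg hi, if_neg (fun hc => hi hc.1)]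

lemma iotaM_one_mul {n p : ℕ} (hnp : n ≤ p) (M : Matrix (Fin p) (Fin p) ℂ) :
    iotaM hnp 1 * M = Matrix.of fun (i j : Fin p) => if (i : ℕ) < n then M i j else 0 := by
  ext i j
  rw [Matrix.mul_apply]
  simp only [Matrix.of_apply]
  by_cases hi : (i : ℕ) < n
  · rw [if_pos hi]
    calc (∑ k, iotaM hnp (1 : Matrix (Fin n) (Fin n) ℂ) i k * M k j)
        = ∑ k : Fin p, (if i = k then M k j else 0) := by
          refine Finset.sum_congr rfl fun k _ => ?_
          rw [iotaM_one_apply]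
          by_cases he : i = k
          · rw [if_pos ⟨hi, he⟩, if_pos he, one_mul]
          · rw [if_neg (fun hc => he hc.2), if_neg he, zero_mul]
      _ = M i j := by rw [Finset.sum_ite_eq]; simp
  · rw [if_neg hi]
    refine Finset.sum_eq_zero fun k _ => ?_
    rw [iotaM_one_apply, if_neg (fun hc => hi hc.1), zero_mul]

lemma mul_iotaM_one {n p : ℕ} (hnp : n ≤ p) (M : Matrix (Fin p) (Fin p) ℂ) :
    M * iotaM hnp 1 = Matrix.of fun (i j : Fin p) => if (j : ℕ) < n then M i j else 0 := by
  ext i j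
  rw [Matrix.mul_apply]
  simp only [Matrix.of_apply]
  by_cases hj : (j : ℕ) < n
  · rw [if_pos hj]
    calc (∑ k, M i k * iotaM hnp (1 : Matrix (Fin n) (Fin n) ℂ) k j)
        = ∑ k : Fin p, (if j = k then M i k else 0) := by
          refine Finset.sum_congr rfl fun k _ => ?_
          rw [iotaM_one_apply]
          by_cases he : j = k
          · rw [if_pos ⟨he ▸ hj, he.symm⟩, if_pos he, mul_one]
          · rw [if_neg (fun hc => he hc.2.symm), if_neg he, mul_zero]
      _ = M i j := by rw [Finset.sum_ite_eq]; simp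
  · rw [if_neg hj]
    refine Finset.sum_eq_zero fun k _ => ?_
    rw [iotaM_one_apply, if_neg (fun hc : (k : ℕ) < n ∧ k = j => hj (hc.2 ▸ hc.1)), mul_zero]

lemma euclid_norm_clm {p : ℕ} (M : Matrix (Fin p) (Fin p) ℂ) (x : EuclideanSpace ℂ (Fin p)) :
    ‖toEuclideanCLM (𝕜 := ℂ) M x‖ = Real.sqrt (∑ i, ‖M.mulVec (fun j => x j) i‖ ^ 2) := by
  rw [EuclideanSpace.norm_eq]
  congr 1

lemma opNorm_le_sqrt {p : ℕ} (M : Matrix (Fin p) (Fin p) ℂ) :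
    opNorm M ≤ Real.sqrt (∑ i, ∑ j, ‖M i j‖ ^ 2) := by
  have hS : (0 : ℝ) ≤ ∑ i, ∑ j, ‖M i j‖ ^ 2 :=
    Finset.sum_nonneg fun i _ => Finset.sum_nonneg fun j _ => sq_nonneg _
  unfold opNorm
  refine ContinuousLinearMap.opNorm_le_bound _ (Real.sqrt_nonneg _) fun x => ?_
  rw [euclid_norm_clm]
  have hrow : ∀ i, ‖M.mulVec (fun j => x j) i‖ ^ 2
      ≤ (∑ j, ‖M i j‖ ^ 2) * ∑ j, ‖x j‖ ^ 2 := by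
    intro i
    have h0 : M.mulVec (fun j => x j) i = ∑ j, M i j * x j := rfl
    have h1 : ‖M.mulVec (fun j => x j) i‖ ≤ ∑ j, ‖M i j‖ * ‖x j‖ := by
      rw [h0]
      refine (norm_sum_le _ _).trans_eq ?_
      exact Finset.sum_congr rfl fun j _ => norm_mul _ _
    calc ‖M.mulVec (fun j => x j) i‖ ^ 2 ≤ (∑ j, ‖M i j‖ * ‖x j‖) ^ 2 :=
          pow_le_pow_left₀ (norm_nonneg _) h1 2
      _ ≤ (∑ j, ‖M i j‖ ^ 2) * ∑ j, ‖x j‖ ^ 2 :=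
          Finset.sum_mul_sq_le_sq_mul_sq Finset.univ _ _
  calc Real.sqrt (∑ i, ‖M.mulVec (fun j => x j) i‖ ^ 2)
      ≤ Real.sqrt (∑ i, (∑ j, ‖M i j‖ ^ 2) * ∑ j, ‖x j‖ ^ 2) :=
        Real.sqrt_le_sqrt (Finset.sum_le_sum fun i _ => hrow i)
    _ = Real.sqrt ((∑ i, ∑ j, ‖M i j‖ ^ 2) * ∑ j, ‖x j‖ ^ 2) := by rw [← Finset.sum_mul]
    _ = Real.sqrt (∑ i, ∑ j, ‖M i j‖ ^ 2) * Real.sqrt (∑ j, ‖x j‖ ^ 2) := Real.sqrt_mul hS _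
    _ = Real.sqrt (∑ i, ∑ j, ‖M i j‖ ^ 2) * ‖x‖ := by rw [EuclideanSpace.norm_eq]

lemma opNorm_iotaM_le {n p : ℕ} (hnp : n ≤ p) (A : Matrix (Fin n) (Fin n) ℂ) :
    opNorm (iotaM hnp A) ≤ opNorm A := by
  unfold opNorm
  refine ContinuousLinearMap.opNorm_le_bound _ (norm_nonneg _) fun x => ?_
  set x' : EuclideanSpace ℂ (Fin n) := WithLp.toLp 2 (fun j => x (Fin.castLE hnp j)) with hx'
  have hxle : ‖x'‖ ≤ ‖x‖ := by
    rw [EuclideanSpace.norm_eq, EuclideanSpace.norm_eq]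
    apply Real.sqrt_le_sqrt
    rw [show (∑ j : Fin n, ‖x' j‖ ^ 2) = ∑ i : Fin p,
        (if h : (i : ℕ) < n then ‖x' ⟨i, h⟩‖ ^ 2 else 0) from
      (sum_dite_lt hnp (fun j : Fin n => ‖x' j‖ ^ 2)).symm]
    refine Finset.sum_le_sum fun i _ => ?_
    by_cases hi : (i : ℕ) < n
    · rw [dif_pos hi, hx']
      have h2 : Fin.castLE hnp ⟨(i : ℕ), hi⟩ = i := Fin.ext rfl
      exact le_of_eq (congrArg (fun t => ‖x t‖ ^ 2) h2)
    · rw [dif_neg hi]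
      exact sq_nonneg _
  have hval : ∀ i : Fin p, (iotaM hnp A).mulVec (fun j => x j) i
      = if h : (i : ℕ) < n then A.mulVec (fun j => x' j) ⟨i, h⟩ else 0 := by
    intro i
    show (∑ j, iotaM hnp A i j * x j) = _
    by_cases hi : (i : ℕ) < n
    · rw [dif_pos hi]
      show _ = ∑ j : Fin n, A ⟨i, hi⟩ j * x' j
      rw [← sum_dite_lt hnp (fun j : Fin n => A ⟨i, hi⟩ j * x' j)]
      refine Finset.sum_congr rfl fun j _ => ?_
      simp only [iotaM, Matrix.of_apply, dif_pos hi]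
      by_cases hj : (j : ℕ) < n
      · rw [dif_pos hj, dif_pos hj, hx']
        have h2 : Fin.castLE hnp ⟨(j : ℕ), hj⟩ = j := Fin.ext rfl
        exact (congrArg (fun t => A ⟨(i : ℕ), hi⟩ ⟨(j : ℕ), hj⟩ * x t) h2).symm
      · rw [dif_neg hj, dif_neg hj, zero_mul]
    · rw [dif_neg hi]
      refine Finset.sum_eq_zero fun j _ => ?_
      simp only [iotaM, Matrix.of_apply, dif_neg hi, zero_mul]
  have h1 : ‖toEuclideanCLM (𝕜 := ℂ) (iotaM hnp A) x‖
      = ‖toEuclideanCLM (𝕜 := ℂ) A x'‖ := by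
    rw [euclid_norm_clm, euclid_norm_clm]
    congr 1
    rw [← sum_dite_lt hnp (fun i : Fin n => ‖A.mulVec (fun j => x' j) i‖ ^ 2)]
    refine Finset.sum_congr rfl fun i _ => ?_
    rw [hval i]
    by_cases hi : (i : ℕ) < n
    · rw [dif_pos hi, dif_pos hi]
    · rw [dif_neg hi, dif_neg hi, norm_zero]
      simp
  calc ‖toEuclideanCLM (𝕜 := ℂ) (iotaM hnp A) x‖ = ‖toEuclideanCLM (𝕜 := ℂ) A x'‖ := h1
    _ ≤ ‖toEuclideanCLM (𝕜 := ℂ) A‖ * ‖x'‖ := ContinuousLinearMap.le_opNorm _ _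
    _ ≤ ‖toEuclideanCLM (𝕜 := ℂ) A‖ * ‖x‖ := mul_le_mul_of_nonneg_left hxle (norm_nonneg _)

lemma opNorm_nonneg {n : ℕ} (M : Matrix (Fin n) (Fin n) ℂ) : 0 ≤ opNorm M :=
  norm_nonneg _

lemma opNorm_mul_le {n : ℕ} (X Y : Matrix (Fin n) (Fin n) ℂ) :
    opNorm (X * Y) ≤ opNorm X * opNorm Y := by
  rw [opNorm_eq, opNorm_eq, opNorm_eq]
  exact Matrix.l2_opNorm_mul X Y

lemma det_bound {n p : ℕ} (hnp : n ≤ p) (A B : Matrix (Fin n) (Fin n) ℂ)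
    (H : Matrix (Fin p) (Fin p) ℂ) :
    opNorm (iotaM hnp A * H * iotaM hnp B) ^ 2
      ≤ opNorm A ^ 2 * opNorm B ^ 2 *
        ∑ i : Fin p, ∑ j : Fin p, (if (i : ℕ) < n ∧ (j : ℕ) < n then ‖H i j‖ ^ 2 else 0) := by
  set P := iotaM hnp (1 : Matrix (Fin n) (Fin n) ℂ) with hP
  set S : ℝ := ∑ i : Fin p, ∑ j : Fin p, (if (i : ℕ) < n ∧ (j : ℕ) < n then ‖H i j‖ ^ 2 else 0) with hSdef
  have hS : (0 : ℝ) ≤ S := Finset.sum_nonneg fun i _ => Finset.sum_nonneg fun j _ => by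
    by_cases h : (i : ℕ) < n ∧ (j : ℕ) < n
    · rw [if_pos h]; exact sq_nonneg _
    · rw [if_neg h]
  have hfac : iotaM hnp A * H * iotaM hnp B
      = iotaM hnp A * (P * H * P) * iotaM hnp B := by
    have h1 : iotaM hnp A * P = iotaM hnp A := by rw [hP, iotaM_mul, mul_one]
    have h2 : P * iotaM hnp B = iotaM hnp B := by rw [hP, iotaM_mul, one_mul]
    calc iotaM hnp A * H * iotaM hnp B
        = (iotaM hnp A * P) * H * (P * iotaM hnp B) := by rw [h1, h2]
      _ = iotaM hnp A * (P * H * P) * iotaM hnp B := by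
          simp only [mul_assoc]
  have hPHP : ∀ i j : Fin p, (P * H * P) i j
      = if ((i : ℕ) < n ∧ (j : ℕ) < n) then H i j else 0 := by
    intro i j
    have e1 : P * H * P = Matrix.of fun (i j : Fin p) =>
        if (j : ℕ) < n then (P * H) i j else 0 := mul_iotaM_one hnp (P * H)
    have e2 : P * H = Matrix.of fun (i j : Fin p) =>
        if (i : ℕ) < n then H i j else 0 := iotaM_one_mul hnp H
    rw [e1]
    simp only [Matrix.of_apply]
    rw [e2]
    simp only [Matrix.of_apply]
    by_cases hi : (i : ℕ) < n
    · by_cases hj : (j : ℕ) < n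
      · rw [if_pos hj, if_pos hi, if_pos ⟨hi, hj⟩]
      · rw [if_neg hj, if_neg (fun hc => hj hc.2)]
    · by_cases hj : (j : ℕ) < n
      · rw [if_pos hj, if_neg hi, if_neg (fun hc => hi hc.1)]
      · rw [if_neg hj, if_neg (fun hc => hj hc.2)]
  have hPHPnorm : opNorm (P * H * P) ≤ Real.sqrt S := by
    refine (opNorm_le_sqrt _).trans_eq ?_
    congr 1
    rw [hSdef]
    refine Finset.sum_congr rfl fun i _ => Finset.sum_congr rfl fun j _ => ?_
    rw [hPHP i j]
    by_cases h : (i : ℕ) < n ∧ (j : ℕ) < n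
    · rw [if_pos h, if_pos h]
    · rw [if_neg h, if_neg h, norm_zero]
      simp
  have hstep : opNorm (iotaM hnp A * H * iotaM hnp B)
      ≤ opNorm A * Real.sqrt S * opNorm B := by
    rw [hfac]
    calc opNorm (iotaM hnp A * (P * H * P) * iotaM hnp B)
        ≤ opNorm (iotaM hnp A * (P * H * P)) * opNorm (iotaM hnp B) :=
          opNorm_mul_le _ _
      _ ≤ (opNorm (iotaM hnp A) * opNorm (P * H * P)) * opNorm (iotaM hnp B) :=
          mul_le_mul_of_nonneg_right (opNorm_mul_le _ _) (opNorm_nonneg _)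
      _ ≤ (opNorm A * Real.sqrt S) * opNorm B := by
          refine mul_le_mul ?_ (opNorm_iotaM_le hnp B) (opNorm_nonneg _)
            (mul_nonneg (opNorm_nonneg _) (Real.sqrt_nonneg _))
          exact mul_le_mul (opNorm_iotaM_le hnp A) hPHPnorm (opNorm_nonneg _)
            (opNorm_nonneg _)
  calc opNorm (iotaM hnp A * H * iotaM hnp B) ^ 2
      ≤ (opNorm A * Real.sqrt S * opNorm B) ^ 2 :=
        pow_le_pow_left₀ (opNorm_nonneg _) hstep 2
    _ = opNorm A ^ 2 * opNorm B ^ 2 * S := by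
        rw [mul_pow, mul_pow, Real.sq_sqrt hS]
        ring


lemma permMatrix_mem_unitary {p : ℕ} (σ : Equiv.Perm (Fin p)) :
    (σ.toPEquiv.toMatrix : Matrix (Fin p) (Fin p) ℂ) ∈ Matrix.unitaryGroup (Fin p) ℂ := by
  rw [Matrix.mem_unitaryGroup_iff]
  have hstar : star (σ.toPEquiv.toMatrix : Matrix (Fin p) (Fin p) ℂ)
      = (σ⁻¹.toPEquiv.toMatrix : Matrix (Fin p) (Fin p) ℂ) := by
    rw [Matrix.star_eq_conjTranspose]
    ext i j
    simp only [Matrix.conjTranspose_apply, PEquiv.toMatrix_apply, Equiv.toPEquiv_apply,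
      Option.mem_def, Option.some.injEq, apply_ite (star : ℂ → ℂ), star_one, star_zero]
    by_cases h : σ j = i
    · rw [if_pos h, if_pos]
      rw [← h, Equiv.Perm.inv_def]; exact Equiv.symm_apply_apply σ j
    · rw [if_neg h, if_neg]
      intro hc
      exact h (by rw [← hc, Equiv.Perm.inv_def]; exact Equiv.apply_symm_apply σ i)
  rw [hstar, ← PEquiv.toMatrix_trans, ← Equiv.toPEquiv_trans]
  have : σ.trans σ⁻¹ = Equiv.refl (Fin p) := by
    ext x; simp
  rw [this, Equiv.toPEquiv_refl, PEquiv.toMatrix_refl]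

/-- **Haar-averaged operator norm bound for embedded PSD blocks.**
If `H` is Haar-distributed on the `p×p` unitary group then
`E ‖ι(A) H ι(B)‖² ≤ (n²/p) ‖A‖² ‖B‖²`. -/
theorem haar_block_opNorm_bound (n p : ℕ) (hnp : n ≤ p)
    (A B : Matrix (Fin n) (Fin n) ℂ) (hA : A.PosSemidef) (hB : B.PosSemidef)
    (μ : Measure (Matrix (Fin p) (Fin p) ℂ)) [IsProbabilityMeasure μ]
    (hUnit : ∀ᵐ H ∂μ, H ∈ Matrix.unitaryGroup (Fin p) ℂ)
    (hInv : ∀ U ∈ Matrix.unitaryGroup (Fin p) ℂ,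
      Measure.map (fun H => U * H) μ = μ) :
    ∫ H, opNorm (iotaM hnp A * H * iotaM hnp B) ^ 2 ∂μ
      ≤ ((n : ℝ) ^ 2 / p) * opNorm A ^ 2 * opNorm B ^ 2 := by
  classical
  set K : ℝ := opNorm A ^ 2 * opNorm B ^ 2 with hK
  have hK0 : 0 ≤ K := mul_nonneg (sq_nonneg _) (sq_nonneg _)
  have hmeas : ∀ i j : Fin p, Measurable fun H : Matrix (Fin p) (Fin p) ℂ => ‖H i j‖ ^ 2 := by
    intro i j
    have h1 : Measurable fun H : Matrix (Fin p) (Fin p) ℂ => H i j :=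
      (measurable_pi_apply j).comp (measurable_pi_apply i)
    exact h1.norm.pow_const 2
  have hcol : ∀ᵐ H ∂μ, ∀ j : Fin p, (∑ i : Fin p, ‖H i j‖ ^ 2) = 1 := by
    filter_upwards [hUnit] with H hH
    intro j
    have h1 : star H * H = 1 := Matrix.mem_unitaryGroup_iff'.mp hH
    have h2 : (star H * H) j j = (1 : Matrix (Fin p) (Fin p) ℂ) j j := by rw [h1]
    rw [Matrix.mul_apply, Matrix.one_apply_eq] at h2
    have h3 : ∀ i : Fin p, (star H) j i * H i j = ((‖H i j‖ ^ 2 : ℝ) : ℂ) := by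
      intro i
      rw [Matrix.star_apply, Complex.star_def, RCLike.conj_mul]
      exact (Complex.ofReal_pow _ _).symm
    rw [Finset.sum_congr rfl (fun i _ => h3 i)] at h2
    exact_mod_cast h2
  have hbdd : ∀ i j : Fin p, ∀ᵐ H ∂μ, ‖H i j‖ ^ 2 ≤ 1 := by
    intro i j
    filter_upwards [hcol] with H hH
    calc ‖H i j‖ ^ 2 ≤ ∑ k : Fin p, ‖H k j‖ ^ 2 :=
          Finset.single_le_sum (fun k _ => sq_nonneg ‖H k j‖) (Finset.mem_univ i)
      _ = 1 := hH j
  have hint : ∀ i j : Fin p, Integrable (fun H => ‖H i j‖ ^ 2) μ := by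
    intro i j
    refine Integrable.mono' (integrable_const (1 : ℝ)) (hmeas i j).aestronglyMeasurable ?_
    filter_upwards [hbdd i j] with H hH
    rw [Real.norm_of_nonneg (sq_nonneg _)]
    exact hH
  set c : Fin p → Fin p → ℝ := fun i j => ∫ H, ‖H i j‖ ^ 2 ∂μ with hc
  have hc0 : ∀ i j, 0 ≤ c i j := fun i j => integral_nonneg fun H => sq_nonneg _
  have hcolsum : ∀ j, (∑ i : Fin p, c i j) = 1 := by
    intro j
    simp only [hc]
    rw [← integral_finset_sum Finset.univ (fun i _ => hint i j)]
    have he : ∫ H, (∑ i : Fin p, ‖H i j‖ ^ 2) ∂μ = ∫ _H, (1 : ℝ) ∂μ :=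
      integral_congr_ae (by filter_upwards [hcol] with H hH using hH j)
    rw [he, integral_const]
    simp
  have hperm : ∀ (σ : Equiv.Perm (Fin p)) (i j : Fin p), c (σ i) j = c i j := by
    intro σ i j
    set U : Matrix (Fin p) (Fin p) ℂ := σ.toPEquiv.toMatrix with hU
    have hUm : U ∈ Matrix.unitaryGroup (Fin p) ℂ := permMatrix_mem_unitary σ
    have hT : Measurable fun H : Matrix (Fin p) (Fin p) ℂ => U * H := by
      apply measurable_pi_lambda
      intro a
      apply measurable_pi_lambda
      intro b
      simp only [Matrix.mul_apply]
      refine Finset.measurable_sum _ fun k _ => ?_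
      have hm : Measurable fun H : Matrix (Fin p) (Fin p) ℂ => H k b :=
        (measurable_pi_apply b).comp (measurable_pi_apply k)
      exact hm.const_mul (U a k)
    have h2 : ∀ H : Matrix (Fin p) (Fin p) ℂ, (U * H) i j = H (σ i) j := by
      intro H
      rw [hU, PEquiv.toMatrix_toPEquiv_mul]
      rfl
    have h1 : c i j = ∫ H, ‖H i j‖ ^ 2 ∂(Measure.map (fun H => U * H) μ) := by
      rw [hInv U hUm]
    rw [integral_map hT.aemeasurable (hmeas i j).aestronglyMeasurable] at h1
    simp only [hc]
    rw [← integral_congr_ae (Filter.Eventually.of_forall fun H => by rw [h2 H])] at h1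
    exact h1.symm
  have hpc : ∀ i j : Fin p, (p : ℝ) * c i j = 1 := by
    intro i j
    have hall : ∀ k : Fin p, c k j = c i j := by
      intro k
      have h := hperm (Equiv.swap k i) i j
      rw [Equiv.swap_apply_right] at h
      exact h
    calc (p : ℝ) * c i j = ∑ _k : Fin p, c i j := by
          rw [Finset.sum_const, Finset.card_univ, Fintype.card_fin, nsmul_eq_mul]
      _ = ∑ k : Fin p, c k j := Finset.sum_congr rfl fun k _ => (hall k).symm
      _ = 1 := hcolsum j
  have hti : ∀ i j : Fin p, Integrable
      (fun H : Matrix (Fin p) (Fin p) ℂ =>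
        if (i : ℕ) < n ∧ (j : ℕ) < n then ‖H i j‖ ^ 2 else 0) μ := by
    intro i j
    by_cases h : (i : ℕ) < n ∧ (j : ℕ) < n
    · simp only [if_pos h]
      exact hint i j
    · simp only [if_neg h]
      exact integrable_const 0
  have hsi : ∀ i : Fin p, Integrable
      (fun H : Matrix (Fin p) (Fin p) ℂ =>
        ∑ j : Fin p, if (i : ℕ) < n ∧ (j : ℕ) < n then ‖H i j‖ ^ 2 else 0) μ :=
    fun i => integrable_finset_sum _ fun j _ => hti i j
  have hgint : Integrable
      (fun H : Matrix (Fin p) (Fin p) ℂ =>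
        K * ∑ i : Fin p, ∑ j : Fin p,
          (if (i : ℕ) < n ∧ (j : ℕ) < n then ‖H i j‖ ^ 2 else 0)) μ :=
    (integrable_finset_sum _ fun i _ => hsi i).const_mul K
  have hmono := integral_mono_of_nonneg
    (Filter.Eventually.of_forall fun H => sq_nonneg
      (opNorm (iotaM hnp A * H * iotaM hnp B)))
    hgint
    (Filter.Eventually.of_forall fun H => by
      simpa [hK] using det_bound hnp A B H)
  refine hmono.trans ?_
  have hgval : (∫ H, (K * ∑ i : Fin p, ∑ j : Fin p,
        (if (i : ℕ) < n ∧ (j : ℕ) < n then ‖H i j‖ ^ 2 else 0)) ∂μ)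
      = K * ∑ i : Fin p, ∑ j : Fin p,
          (if (i : ℕ) < n ∧ (j : ℕ) < n then c i j else 0) := by
    rw [integral_const_mul]
    congr 1
    rw [integral_finset_sum _ (fun i _ => hsi i)]
    refine Finset.sum_congr rfl fun i _ => ?_
    rw [integral_finset_sum _ (fun j _ => hti i j)]
    refine Finset.sum_congr rfl fun j _ => ?_
    by_cases h : (i : ℕ) < n ∧ (j : ℕ) < n
    · simp only [if_pos h, hc]
    · simp only [if_neg h]
      exact integral_zero _ _
  rw [hgval]
  have hxcount : ∀ x : ℝ, (∑ i : Fin p, if (i : ℕ) < n then x else 0) = n * x := by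
    intro x
    have h1 := sum_dite_lt hnp (fun _ : Fin n => x)
    simp only [dite_eq_ite] at h1
    rw [h1, Finset.sum_const, Finset.card_univ, Fintype.card_fin, nsmul_eq_mul]
  have hsum : (∑ i : Fin p, ∑ j : Fin p,
      (if (i : ℕ) < n ∧ (j : ℕ) < n then c i j else 0)) ≤ (n : ℝ) ^ 2 / p := by
    rcases Nat.eq_zero_or_pos p with hp | hp
    · subst hp
      simp
    · have hp' : (0 : ℝ) < p := by exact_mod_cast hp
      have hcv : ∀ i j : Fin p, c i j = 1 / p := by
        intro i j
        rw [eq_div_iff hp'.ne', mul_comm]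
        exact hpc i j
      have heq : (∑ i : Fin p, ∑ j : Fin p,
          (if (i : ℕ) < n ∧ (j : ℕ) < n then c i j else 0))
          = ∑ i : Fin p, (if (i : ℕ) < n then (n : ℝ) * (1 / p) else 0) := by
        refine Finset.sum_congr rfl fun i _ => ?_
        by_cases hi : (i : ℕ) < n
        · rw [if_pos hi, ← hxcount (1 / (p : ℝ))]
          refine Finset.sum_congr rfl fun j _ => ?_
          by_cases hj : (j : ℕ) < n
          · rw [if_pos ⟨hi, hj⟩, if_pos hj, hcv]
          · rw [if_neg (fun hcnd => hj hcnd.2), if_neg hj]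
        · rw [if_neg hi]
          exact Finset.sum_eq_zero fun j _ => if_neg (fun hcnd => hi hcnd.1)
      rw [heq, hxcount ((n : ℝ) * (1 / p))]
      refine le_of_eq ?_
      field_simp
  calc K * ∑ i : Fin p, ∑ j : Fin p,
        (if (i : ℕ) < n ∧ (j : ℕ) < n then c i j else 0)
      ≤ K * ((n : ℝ) ^ 2 / p) := mul_le_mul_of_nonneg_left hsum hK0
    _ = (n : ℝ) ^ 2 / p * opNorm A ^ 2 * opNorm B ^ 2 := by rw [hK]; ring
end

section
/- Let Q be a noncommutative multilinear polynomial of degree d in m variables with n×n matrix coefficients, and let b_1,...,b_m be i.i.d. uniform ±1 random variables. Then for every integer K ≥ 1, E Tr|Q(b_1,...,b_m)|^{2K} ≤ (2K−1)^{dK} (E Tr|Q(b_1,...,b_m)|^2)^K. -/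
lemma chooseA (K : ℕ) : ∀ i : ℕ, (2*K).choose (2*i) ≤ K.choose i * (2*K-1)^i := by
  intro i
  induction i with
  | zero => simp
  | succ i ih =>
    rcases le_or_gt K i with h | h
    · rw [Nat.choose_eq_zero_of_lt (by omega)]
      exact Nat.zero_le _
    have e1 : (2*K).choose (2*i+1) * (2*i+1) = (2*K).choose (2*i) * (2*K - 2*i) :=
      Nat.choose_succ_right_eq (2*K) (2*i)
    have e2 : (2*K).choose (2*i+2) * (2*i+2) = (2*K).choose (2*i+1) * (2*K - (2*i+1)) :=
      Nat.choose_succ_right_eq (2*K) (2*i+1)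
    have key1 : (2*K).choose (2*i+2) * (2*i+2) * (2*i+1)
        = (2*K).choose (2*i) * (2*K - 2*i) * (2*K - (2*i+1)) := by
      rw [e2, mul_right_comm, e1]
    have key2 : K.choose (i+1) * (i+1) = K.choose i * (K - i) := Nat.choose_succ_right_eq K i
    have h2 : 2*K - (2*i+1) ≤ (2*K-1) * (2*i+1) :=
      le_trans (by omega) (Nat.le_mul_of_pos_right _ (by omega))
    have step : (2*K).choose (2*i+2) * ((2*i+2) * (2*i+1))
        ≤ (K.choose (i+1) * (2*K-1)^(i+1)) * ((2*i+2) * (2*i+1)) := by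
      calc (2*K).choose (2*i+2) * ((2*i+2) * (2*i+1))
          = (2*K).choose (2*i) * ((2*K - 2*i) * (2*K - (2*i+1))) := by
            rw [← mul_assoc, key1]; ring
        _ ≤ (K.choose i * (2*K-1)^i) * ((2*K - 2*i) * (2*K - (2*i+1))) :=
            Nat.mul_le_mul_right _ ih
        _ ≤ (K.choose i * (2*K-1)^i) * ((2*(K-i)) * ((2*K-1) * (2*i+1))) := by
            apply Nat.mul_le_mul_left
            have h1 : 2*K - 2*i = 2*(K-i) := by omega
            rw [h1]
            exact Nat.mul_le_mul_left _ h2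
        _ = (K.choose i * (K - i)) * (2*K-1)^(i+1) * (2 * (2*i+1)) := by ring
        _ = (K.choose (i+1) * (i+1)) * (2*K-1)^(i+1) * (2 * (2*i+1)) := by rw [key2]
        _ = (K.choose (i+1) * (2*K-1)^(i+1)) * ((2*i+2) * (2*i+1)) := by ring
    exact Nat.le_of_mul_le_mul_right step (by positivity)


lemma evenExpand (N : ℕ) (p q : ℝ) :
    (p+q)^N + (p-q)^N
      = ∑ j ∈ Finset.range (N+1), (q^j + (-q)^j) * p^(N-j) * (N.choose j : ℝ) := by
  have h1 : (p+q)^N = (q+p)^N := by rw [add_comm]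
  have h2 : (p-q)^N = (-q+p)^N := by rw [neg_add_eq_sub]
  rw [h1, h2, add_pow, add_pow, ← Finset.sum_add_distrib]
  exact Finset.sum_congr rfl fun j _ => by ring

lemma monoStep (N : ℕ) (u t s : ℝ) (hu : 0 ≤ u) (hts : |t| ≤ s) :
    (u+2*t)^N + (u-2*t)^N ≤ (u+2*s)^N + (u-2*s)^N := by
  rw [evenExpand, evenExpand]
  apply Finset.sum_le_sum
  intro j _
  rcases Nat.even_or_odd j with he | ho
  · have h1 : ((2*t)^j + (-(2*t))^j) = 2*(2*t)^j := by rw [he.neg_pow]; ring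
    have h2 : ((2*s)^j + (-(2*s))^j) = 2*(2*s)^j := by rw [he.neg_pow]; ring
    rw [h1, h2]
    have habs : |2*t| ≤ 2*s := by
      rw [abs_mul, abs_two]; linarith
    have hle : (2*t)^j ≤ (2*s)^j := by
      calc (2*t)^j = |2*t|^j := (he.pow_abs _).symm
        _ ≤ (2*s)^j := pow_le_pow_left₀ (abs_nonneg _) habs j
    have hnn : (0:ℝ) ≤ u^(N-j) * ((N.choose j):ℝ) := by positivity
    nlinarith [hle, hnn]
  · have h1 : ((2*t)^j + (-(2*t))^j) = 0 := by rw [ho.neg_pow]; ring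
    have h2 : ((2*s)^j + (-(2*s))^j) = 0 := by rw [ho.neg_pow]; ring
    rw [h1, h2]

lemma twoPoint (K : ℕ) (a b : ℝ) :
    (a+b)^(2*K) + (a-b)^(2*K) ≤ 2 * (a^2 + ((2*K-1 : ℕ):ℝ) * b^2)^K := by
  rw [evenExpand]
  have himg : (Finset.range (2*K+1)).filter (fun j => Even j)
      = (Finset.range (K+1)).image (fun i => 2*i) := by
    ext j
    simp only [Finset.mem_filter, Finset.mem_range, Finset.mem_image]
    constructor
    · rintro ⟨hj, r, hr⟩
      exact ⟨r, by omega, by omega⟩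
    · rintro ⟨i, hi, rfl⟩
      exact ⟨by omega, i, by omega⟩
  rw [← Finset.sum_filter_add_sum_filter_not (Finset.range (2*K+1)) (fun j => Even j)]
  have hodd : (∑ j ∈ (Finset.range (2*K+1)).filter (fun j => ¬ Even j),
      (b^j + (-b)^j) * a^(2*K-j) * ((2*K).choose j : ℝ)) = 0 := by
    apply Finset.sum_eq_zero
    intro j hj
    have ho : Odd j := Nat.not_even_iff_odd.mp (Finset.mem_filter.mp hj).2
    rw [ho.neg_pow]; ring
  rw [hodd, add_zero, himg, Finset.sum_image (fun x _ y _ h => by omega)]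
  have expand : 2 * (a^2 + ((2*K-1:ℕ):ℝ) * b^2)^K
      = ∑ i ∈ Finset.range (K+1),
          2 * ((K.choose i * (2*K-1)^i : ℕ):ℝ) * (b^2)^i * (a^2)^(K-i) := by
    have hc : a^2 + ((2*K-1:ℕ):ℝ)*b^2 = ((2*K-1:ℕ):ℝ)*b^2 + a^2 := by ring
    rw [hc, add_pow, Finset.mul_sum]
    apply Finset.sum_congr rfl
    intro i _
    push_cast
    ring
  rw [expand]
  apply Finset.sum_le_sum
  intro i hi
  have h1 : (b:ℝ)^(2*i) + (-b)^(2*i) = 2*(b^2)^i := by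
    rw [Even.neg_pow (even_two_mul i), pow_mul]; ring
  have h2 : a^(2*K-2*i) = (a^2)^(K-i) := by
    rw [show 2*K-2*i = 2*(K-i) by omega, pow_mul]
  rw [h1, h2]
  have hcast : ((2*K).choose (2*i) : ℝ) ≤ ((K.choose i * (2*K-1)^i : ℕ):ℝ) := by
    exact_mod_cast chooseA K i
  have hnn : (0:ℝ) ≤ (b^2)^i * (a^2)^(K-i) := by positivity
  nlinarith [hcast, hnn, mul_le_mul_of_nonneg_right hcast hnn]

lemma vecTP {ι : Type*} [Fintype ι] (K : ℕ) (x y : ι → ℝ) :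
    (∑ i, (x i + y i)^2)^K + (∑ i, (x i - y i)^2)^K
      ≤ 2 * ((∑ i, (x i)^2) + ((2*K-1:ℕ):ℝ) * (∑ i, (y i)^2))^K := by
  set X := ∑ i, (x i)^2 with hXdef
  set Y := ∑ i, (y i)^2 with hYdef
  set T := ∑ i, x i * y i with hTdef
  have hX : 0 ≤ X := Finset.sum_nonneg fun _ _ => sq_nonneg _
  have hY : 0 ≤ Y := Finset.sum_nonneg fun _ _ => sq_nonneg _
  have hplus : (∑ i, (x i + y i)^2) = (X + Y) + 2*T := by
    simp only [hXdef, hYdef, hTdef, Finset.mul_sum, ← Finset.sum_add_distrib]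
    exact Finset.sum_congr rfl fun i _ => by ring
  have hminus : (∑ i, (x i - y i)^2) = (X + Y) - 2*T := by
    simp only [hXdef, hYdef, hTdef, Finset.mul_sum, ← Finset.sum_add_distrib,
      ← Finset.sum_sub_distrib]
    exact Finset.sum_congr rfl fun i _ => by ring
  have hCS : T^2 ≤ X*Y := Finset.sum_mul_sq_le_sq_mul_sq Finset.univ x y
  set A := Real.sqrt X with hAdef
  set B := Real.sqrt Y with hBdef
  have hA : A^2 = X := Real.sq_sqrt hX
  have hB : B^2 = Y := Real.sq_sqrt hY
  have hs : |T| ≤ A*B := by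
    calc |T| = Real.sqrt (T^2) := (Real.sqrt_sq_eq_abs T).symm
      _ ≤ Real.sqrt (X*Y) := Real.sqrt_le_sqrt hCS
      _ = A*B := Real.sqrt_mul hX Y
  rw [hplus, hminus]
  calc ((X+Y)+2*T)^K + ((X+Y)-2*T)^K
      ≤ ((X+Y)+2*(A*B))^K + ((X+Y)-2*(A*B))^K :=
        monoStep K (X+Y) T (A*B) (by linarith) hs
    _ = ((A+B)^2)^K + ((A-B)^2)^K := by rw [← hA, ← hB]; ring_nf
    _ = (A+B)^(2*K) + (A-B)^(2*K) := by rw [← pow_mul, ← pow_mul]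
    _ ≤ 2 * (A^2 + ((2*K-1:ℕ):ℝ) * B^2)^K := twoPoint K A B
    _ = 2 * (X + ((2*K-1:ℕ):ℝ) * Y)^K := by rw [hA, hB]
open scoped ENNReal NNReal

lemma minkowskiPow {R : Type*} [Fintype R] (K : ℕ) (hK : 1 ≤ K) (X Y : R → ℝ)
    (hXn : ∀ r, 0 ≤ X r) (hYn : ∀ r, 0 ≤ Y r) {α β : ℝ} (hα : 0 ≤ α) (hβ : 0 ≤ β)
    (h1 : ∑ r, X r ^ K ≤ α ^ K) (h2 : ∑ r, Y r ^ K ≤ β ^ K) :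
    ∑ r, (X r + Y r) ^ K ≤ (α + β) ^ K := by
  haveI : Fact (1 ≤ (K : ℝ≥0∞)) := ⟨by exact_mod_cast hK⟩
  have hKR : (0:ℝ) < (K:ℝ) := by exact_mod_cast Nat.lt_of_lt_of_le Nat.zero_lt_one hK
  have htr : ((K : ℝ≥0∞)).toReal = (K:ℝ) := by simp
  have hnorm : ∀ (W : R → ℝ), (∀ r, 0 ≤ W r) →
      ‖(WithLp.equiv (K : ℝ≥0∞) (R → ℝ)).symm W‖ = (∑ r, W r ^ K) ^ ((K:ℝ))⁻¹ := by
    intro W hW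
    rw [PiLp.norm_eq_sum (by rw [htr]; exact hKR)]
    rw [htr]
    congr 1
    · apply Finset.sum_congr rfl
      intro r _
      rw [WithLp.equiv_symm_apply, PiLp.toLp_apply, Real.norm_eq_abs, abs_of_nonneg (hW r),
        Real.rpow_natCast]
    · rw [one_div]
  have hle : ∀ (W : R → ℝ) (γ : ℝ), (∀ r, 0 ≤ W r) → 0 ≤ γ → (∑ r, W r ^ K ≤ γ ^ K) →
      ‖(WithLp.equiv (K : ℝ≥0∞) (R → ℝ)).symm W‖ ≤ γ := by
    intro W γ hW hγ hb
    rw [hnorm W hW]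
    have hSnn : (0:ℝ) ≤ ∑ r, W r ^ K := Finset.sum_nonneg fun r _ => pow_nonneg (hW r) K
    calc (∑ r, W r ^ K) ^ ((K:ℝ))⁻¹ ≤ (γ ^ K) ^ ((K:ℝ))⁻¹ :=
          Real.rpow_le_rpow hSnn hb (by positivity)
      _ = γ := by
          rw [← Real.rpow_natCast γ K, ← Real.rpow_mul hγ, mul_inv_cancel₀ hKR.ne',
            Real.rpow_one]
  set u := (WithLp.equiv (K : ℝ≥0∞) (R → ℝ)).symm X with hu
  set v := (WithLp.equiv (K : ℝ≥0∞) (R → ℝ)).symm Y with hv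
  have huv : u + v = (WithLp.equiv (K : ℝ≥0∞) (R → ℝ)).symm (X + Y) := by
    rw [hu, hv]; rfl
  have hXY : ∀ r, 0 ≤ (X + Y) r := fun r => add_nonneg (hXn r) (hYn r)
  have hn : ‖u + v‖ = (∑ r, (X r + Y r) ^ K) ^ ((K:ℝ))⁻¹ := by
    rw [huv, hnorm _ hXY]; simp [Pi.add_apply]
  have hb : ‖u + v‖ ≤ α + β :=
    (norm_add_le u v).trans (add_le_add (hle X α hXn hα h1) (hle Y β hYn hβ h2))
  have hS : (0:ℝ) ≤ ∑ r, (X r + Y r) ^ K :=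
    Finset.sum_nonneg fun r _ => pow_nonneg (hXY r) K
  have key : ∑ r, (X r + Y r) ^ K = ‖u + v‖ ^ K := by
    rw [hn, ← Real.rpow_natCast ((∑ r, (X r + Y r) ^ K) ^ ((K:ℝ))⁻¹) K,
      ← Real.rpow_mul hS, inv_mul_cancel₀ hKR.ne', Real.rpow_one]
  rw [key]
  exact pow_le_pow_left₀ (norm_nonneg _) hb K

noncomputable def hcChi {m : ℕ} (S : Finset (Fin m)) (b : Fin m → Bool) : ℝ :=
  ∏ k ∈ S, (if b k then (1:ℝ) else -1)

noncomputable def hcF {m : ℕ} {ι : Type*} [Fintype ι] (c : Finset (Fin m) → ι → ℝ)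
    (b : Fin m → Bool) (i : ι) : ℝ :=
  ∑ S : Finset (Fin m), hcChi S b * c S i

noncomputable def hcN {m : ℕ} {ι : Type*} [Fintype ι] (c : Finset (Fin m) → ι → ℝ)
    (b : Fin m → Bool) : ℝ :=
  ∑ i, (hcF c b i)^2

lemma hcN_nonneg {m : ℕ} {ι : Type*} [Fintype ι] (c : Finset (Fin m) → ι → ℝ)
    (b : Fin m → Bool) : 0 ≤ hcN c b :=
  Finset.sum_nonneg fun _ _ => sq_nonneg _

lemma hcF_indep {m : ℕ} {ι : Type*} [Fintype ι] (c : Finset (Fin m) → ι → ℝ) (j : Fin m)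
    (hc : ∀ S, j ∈ S → c S = 0) (b b' : Fin m → Bool) (h : ∀ k, k ≠ j → b k = b' k) :
    hcF c b = hcF c b' := by
  funext i
  apply Finset.sum_congr rfl
  intro S _
  by_cases hj : j ∈ S
  · rw [hc S hj]; simp
  · unfold hcChi
    congr 1
    apply Finset.prod_congr rfl
    intro k hk
    rw [h k (fun he => hj (he ▸ hk))]

noncomputable def hcRest {m : ℕ} {ι : Type*} (c : Finset (Fin m) → ι → ℝ) (j : Fin m) :
    Finset (Fin m) → ι → ℝ := fun S => if j ∈ S then 0 else c S

noncomputable def hcDer {m : ℕ} {ι : Type*} (c : Finset (Fin m) → ι → ℝ) (j : Fin m) :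
    Finset (Fin m) → ι → ℝ := fun S => if j ∈ S then 0 else c (insert j S)

lemma hcF_split {m : ℕ} {ι : Type*} [Fintype ι] (c : Finset (Fin m) → ι → ℝ) (j : Fin m)
    (b : Fin m → Bool) (i : ι) :
    hcF c b i = hcF (hcRest c j) b i
      + (if b j then (1:ℝ) else -1) * hcF (hcDer c j) b i := by
  unfold hcRest hcDer
  have h1 : hcF (fun S => if j ∈ S then 0 else c S) b i
      = ∑ S ∈ Finset.univ.filter (fun S : Finset (Fin m) => j ∉ S), hcChi S b * c S i := by
    unfold hcF
    rw [Finset.sum_filter]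
    apply Finset.sum_congr rfl
    intro S _
    by_cases hj : j ∈ S <;> simp [hj]
  have h2 : (if b j then (1:ℝ) else -1) * hcF (fun S => if j ∈ S then 0 else c (insert j S)) b i
      = ∑ S ∈ Finset.univ.filter (fun S : Finset (Fin m) => j ∈ S), hcChi S b * c S i := by
    unfold hcF
    rw [Finset.mul_sum]
    have step1 : ∀ S : Finset (Fin m),
        (if b j then (1:ℝ) else -1) * (hcChi S b * ((if j ∈ S then 0 else c (insert j S)) i))
        = if j ∉ S then hcChi (insert j S) b * c (insert j S) i else 0 := by
      intro S
      by_cases hj : j ∈ S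
      · simp [hj]
      · simp only [hj, if_neg, not_false_iff, if_pos, ite_false, ite_true]
        unfold hcChi
        rw [Finset.prod_insert hj]
        ring
    rw [Finset.sum_congr rfl (fun S _ => step1 S), ← Finset.sum_filter]
    apply Finset.sum_nbij' (fun S => insert j S) (fun T => T.erase j)
    · intro S hS
      simp only [Finset.mem_filter, Finset.mem_univ, true_and] at *
      exact Finset.mem_insert_self j S
    · intro T hT
      simp only [Finset.mem_filter, Finset.mem_univ, true_and] at *
      exact Finset.notMem_erase j T
    · intro S hS
      simp only [Finset.mem_filter, Finset.mem_univ, true_and] at hS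
      exact Finset.erase_insert hS
    · intro T hT
      simp only [Finset.mem_filter, Finset.mem_univ, true_and] at hT
      exact Finset.insert_erase hT
    · intro S _
      rfl
  rw [h1, h2, add_comm]
  exact (Finset.sum_filter_add_sum_filter_not Finset.univ (fun S : Finset (Fin m) => j ∈ S)
    (fun S => hcChi S b * c S i)).symm

lemma minkowskiPowW {R : Type*} [Fintype R] (K : ℕ) (hK : 1 ≤ K) (X Y : R → ℝ)
    (hXn : ∀ r, 0 ≤ X r) (hYn : ∀ r, 0 ≤ Y r) {μ α β : ℝ} (hμ : 0 ≤ μ) (hα : 0 ≤ α) (hβ : 0 ≤ β)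
    (h1 : μ * ∑ r, X r ^ K ≤ α ^ K) (h2 : μ * ∑ r, Y r ^ K ≤ β ^ K) :
    μ * ∑ r, (X r + Y r) ^ K ≤ (α + β) ^ K := by
  have hKR : ((K:ℝ)) ≠ 0 := by
    have : (0:ℝ) < (K:ℝ) := by exact_mod_cast Nat.lt_of_lt_of_le Nat.zero_lt_one hK
    exact this.ne'
  set ν := μ ^ ((K:ℝ))⁻¹ with hν
  have hν0 : 0 ≤ ν := Real.rpow_nonneg hμ _
  have hνK : ν ^ K = μ := by
    rw [hν, ← Real.rpow_natCast (μ ^ ((K:ℝ))⁻¹) K, ← Real.rpow_mul hμ,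
      inv_mul_cancel₀ hKR, Real.rpow_one]
  have e : ∀ (W : R → ℝ), μ * ∑ r, W r ^ K = ∑ r, (ν * W r)^K := by
    intro W
    rw [Finset.mul_sum]
    apply Finset.sum_congr rfl
    intro r _
    rw [mul_pow, hνK]
  have key := minkowskiPow K hK (fun r => ν * X r) (fun r => ν * Y r)
    (fun r => mul_nonneg hν0 (hXn r)) (fun r => mul_nonneg hν0 (hYn r)) hα hβ
    (by rw [← e]; exact h1) (by rw [← e]; exact h2)
  rw [e]
  calc ∑ r, (ν * (X r + Y r))^K = ∑ r, ((fun r => ν * X r) r + (fun r => ν * Y r) r)^K := by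
        apply Finset.sum_congr rfl; intro r _; ring_nf
    _ ≤ (α + β)^K := key

lemma hcMain {ι : Type*} [Fintype ι] (m K : ℕ) (hK : 1 ≤ K) (J : Finset (Fin m)) :
    ∀ (d : ℕ) (c : Finset (Fin m) → ι → ℝ),
      (∀ S, ¬ S ⊆ J → c S = 0) → (∀ S, d < S.card → c S = 0) →
      ((2:ℝ)^m)⁻¹ * ∑ b, (hcN c b)^K
        ≤ ((2*K-1:ℕ):ℝ)^(d*K) * (((2:ℝ)^m)⁻¹ * ∑ b, hcN c b)^K := by
  have havg : ∀ x : ℝ, ((2:ℝ)^m)⁻¹ * ∑ _b : Fin m → Bool, x = x := by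
    intro x
    have hcard : ((Fintype.card (Fin m → Bool)):ℝ) = 2^m := by
      simp [Fintype.card_fun]
    rw [Finset.sum_const, Finset.card_univ, nsmul_eq_mul, hcard, ← mul_assoc,
      inv_mul_cancel₀ (by positivity), one_mul]
  have hcst1 : (1:ℝ) ≤ ((2*K-1:ℕ):ℝ) := by
    have : 1 ≤ 2*K-1 := by omega
    exact_mod_cast this
  induction J using Finset.induction_on with
  | empty =>
    intro d c hsupp hdeg
    have hconst : ∀ b i, hcF c b i = c ∅ i := by
      intro b i
      unfold hcF
      rw [Fintype.sum_eq_single (∅ : Finset (Fin m))]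
      · simp [hcChi]
      · intro S hS
        rw [hsupp S (fun h => hS (Finset.subset_empty.mp h))]
        simp
    have hN : ∀ b, hcN c b = ∑ i, (c ∅ i)^2 := by
      intro b
      unfold hcN
      exact Finset.sum_congr rfl fun i _ => by rw [hconst]
    set νv := ∑ i, (c ∅ i)^2 with hνv
    have hν0 : 0 ≤ νv := Finset.sum_nonneg fun _ _ => sq_nonneg _
    calc ((2:ℝ)^m)⁻¹ * ∑ b : Fin m → Bool, (hcN c b)^K
        = ((2:ℝ)^m)⁻¹ * ∑ _b : Fin m → Bool, νv^K := by
          congr 1; exact Finset.sum_congr rfl fun b _ => by rw [hN]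
      _ = νv^K := havg _
      _ ≤ ((2*K-1:ℕ):ℝ)^(d*K) * νv^K :=
          le_mul_of_one_le_left (pow_nonneg hν0 K) (one_le_pow₀ hcst1)
      _ = ((2*K-1:ℕ):ℝ)^(d*K) * (((2:ℝ)^m)⁻¹ * ∑ b : Fin m → Bool, hcN c b)^K := by
          congr 2
          rw [show (∑ b : Fin m → Bool, hcN c b) = ∑ _b : Fin m → Bool, νv from
            Finset.sum_congr rfl fun b _ => hN b, havg]
  | @insert j J' hj ih =>
    intro d c hsupp hdeg
    set c1 := hcRest c j with hc1
    set c2 := hcDer c j with hc2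
    have hc1j : ∀ S, j ∈ S → c1 S = 0 := fun S h => by simp [hc1, hcRest, h]
    have hc2j : ∀ S, j ∈ S → c2 S = 0 := fun S h => by simp [hc2, hcDer, h]
    have hc1supp : ∀ S, ¬ S ⊆ J' → c1 S = 0 := by
      intro S hS
      by_cases hjS : j ∈ S
      · exact hc1j S hjS
      · have : ¬ S ⊆ insert j J' := by
          intro hsub
          exact hS (fun x hx => by
            rcases Finset.mem_insert.mp (hsub hx) with h1 | h1
            · exact absurd (h1 ▸ hx) hjS
            · exact h1)
        simp [hc1, hcRest, hjS, hsupp S this]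
    have hc1deg : ∀ S, d < S.card → c1 S = 0 := by
      intro S hS
      by_cases hjS : j ∈ S
      · exact hc1j S hjS
      · simp [hc1, hcRest, hjS, hdeg S hS]
    have hc2supp : ∀ S, ¬ S ⊆ J' → c2 S = 0 := by
      intro S hS
      by_cases hjS : j ∈ S
      · exact hc2j S hjS
      · have hns : ¬ insert j S ⊆ insert j J' := by
          intro hsub
          exact hS (fun x hx => by
            rcases Finset.mem_insert.mp (hsub (Finset.mem_insert_of_mem hx)) with h1 | h1
            · exact absurd (h1 ▸ hx) hjS
            · exact h1)
        simp [hc2, hcDer, hjS, hsupp _ hns]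
    have hc2deg : ∀ S, d - 1 < S.card → c2 S = 0 := by
      intro S hS
      by_cases hjS : j ∈ S
      · exact hc2j S hjS
      · have : d < (insert j S).card := by
          rw [Finset.card_insert_of_notMem hjS]; omega
        simp [hc2, hcDer, hjS, hdeg _ this]
    -- splitting the cube along coordinate j
    set e := Equiv.funSplitAt j Bool with he
    set br := fun (x : Bool) (r : {k : Fin m // k ≠ j} → Bool) => e.symm (x, r) with hbr
    have hbrj : ∀ x r, br x r j = x := by
      intro x r; simp [hbr, he, Equiv.funSplitAt_symm_apply]
    have hbrk : ∀ x x' r k, k ≠ j → br x r k = br x' r k := by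
      intro x x' r k hk
      simp [hbr, he, Equiv.funSplitAt_symm_apply, dif_neg hk]
    have hsum : ∀ φ : (Fin m → Bool) → ℝ,
        ∑ b, φ b = ∑ r : {k : Fin m // k ≠ j} → Bool, (φ (br true r) + φ (br false r)) := by
      intro φ
      rw [← Equiv.sum_comp e.symm φ, Fintype.sum_prod_type, Fintype.sum_bool,
        ← Finset.sum_add_distrib]
    set A := fun r => hcF c1 (br true r) with hA
    set Bv := fun r => hcF c2 (br true r) with hBv
    have hAf : ∀ r, hcF c1 (br false r) = A r := by
      intro r
      exact hcF_indep c1 j hc1j _ _ (fun k hk => hbrk false true r k hk)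
    have hBf : ∀ r, hcF c2 (br false r) = Bv r := by
      intro r
      exact hcF_indep c2 j hc2j _ _ (fun k hk => hbrk false true r k hk)
    have hval_t : ∀ r i, hcF c (br true r) i = A r i + Bv r i := by
      intro r i
      rw [hcF_split c j (br true r) i, hbrj]
      simp [hA, hBv, hc1, hc2]
    have hval_f : ∀ r i, hcF c (br false r) i = A r i - Bv r i := by
      intro r i
      rw [hcF_split c j (br false r) i, hbrj]
      rw [show hcF (hcRest c j) (br false r) = A r from hAf r,
        show hcF (hcDer c j) (br false r) = Bv r from hBf r]
      simp; ring
    set XA := fun r => ∑ i, (A r i)^2 with hXA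
    set XB := fun r => ∑ i, (Bv r i)^2 with hXB
    have hXAn : ∀ r, 0 ≤ XA r := fun r => Finset.sum_nonneg fun _ _ => sq_nonneg _
    have hXBn : ∀ r, 0 ≤ XB r := fun r => Finset.sum_nonneg fun _ _ => sq_nonneg _
    have hNt : ∀ r, hcN c (br true r) = ∑ i, (A r i + Bv r i)^2 := by
      intro r; unfold hcN
      exact Finset.sum_congr rfl fun i _ => by rw [hval_t]
    have hNf : ∀ r, hcN c (br false r) = ∑ i, (A r i - Bv r i)^2 := by
      intro r; unfold hcN
      exact Finset.sum_congr rfl fun i _ => by rw [hval_f]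
    have hN1 : ∀ x r, hcN c1 (br x r) = XA r := by
      intro x r; unfold hcN
      cases x
      · exact Finset.sum_congr rfl fun i _ => by rw [hAf]
      · rfl
    have hN2 : ∀ x r, hcN c2 (br x r) = XB r := by
      intro x r; unfold hcN
      cases x
      · exact Finset.sum_congr rfl fun i _ => by rw [hBf]
      · rfl
    have S2 : ∑ b, hcN c b = ∑ r, 2 * (XA r + XB r) := by
      rw [hsum (hcN c)]
      apply Finset.sum_congr rfl
      intro r _
      rw [hNt, hNf, hXA, hXB]
      simp only [Finset.mul_sum, ← Finset.sum_add_distrib]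
      exact Finset.sum_congr rfl fun i _ => by ring
    have S3 : ∑ b, (hcN c1 b)^K = ∑ r, 2 * (XA r)^K := by
      rw [hsum (fun b => (hcN c1 b)^K)]
      exact Finset.sum_congr rfl fun r _ => by rw [hN1, hN1]; ring
    have S4 : ∑ b, hcN c1 b = ∑ r, 2 * XA r := by
      rw [hsum (hcN c1)]
      exact Finset.sum_congr rfl fun r _ => by rw [hN1, hN1]; ring
    have S5 : ∑ b, (hcN c2 b)^K = ∑ r, 2 * (XB r)^K := by
      rw [hsum (fun b => (hcN c2 b)^K)]
      exact Finset.sum_congr rfl fun r _ => by rw [hN2, hN2]; ring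
    have S6 : ∑ b, hcN c2 b = ∑ r, 2 * XB r := by
      rw [hsum (hcN c2)]
      exact Finset.sum_congr rfl fun r _ => by rw [hN2, hN2]; ring
    rcases Nat.eq_zero_or_pos d with hd0 | hd
    · -- degree 0 : the derivative part vanishes
      subst hd0
      have hc2zero : ∀ S, c2 S = 0 := by
        intro S
        by_cases hjS : j ∈ S
        · exact hc2j S hjS
        · have : (0:ℕ) < (insert j S).card := by
            rw [Finset.card_insert_of_notMem hjS]; omega
          simp [hc2, hcDer, hjS, hdeg _ this]
      have hFc : ∀ b i, hcF c b i = hcF c1 b i := by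
        intro b i
        rw [hcF_split c j b i]
        have : hcF (hcDer c j) b i = 0 := by
          unfold hcF
          apply Finset.sum_eq_zero
          intro S _
          rw [show hcDer c j S = c2 S from rfl, hc2zero]
          simp
        rw [this, ← hc1]
        simp
      have hNc : ∀ b, hcN c b = hcN c1 b := by
        intro b; unfold hcN
        exact Finset.sum_congr rfl fun i _ => by rw [hFc]
      rw [show (∑ b, (hcN c b)^K) = ∑ b, (hcN c1 b)^K from
          Finset.sum_congr rfl fun b _ => by rw [hNc],
        show (∑ b, hcN c b) = ∑ b, hcN c1 b from
          Finset.sum_congr rfl fun b _ => by rw [hNc]]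
      exact ih 0 c1 hc1supp hc1deg
    · -- degree ≥ 1
      have ih1 := ih d c1 hc1supp hc1deg
      have ih2 := ih (d-1) c2 hc2supp hc2deg
      set cst := ((2*K-1:ℕ):ℝ) with hcstd
      set μ := ((2:ℝ)^m)⁻¹ * 2 with hμd
      have hμ0 : (0:ℝ) ≤ μ := by rw [hμd]; positivity
      have hcst0 : (0:ℝ) ≤ cst := le_trans zero_le_one hcst1
      have hsXA : 0 ≤ ∑ r, XA r := Finset.sum_nonneg fun r _ => hXAn r
      have hsXB : 0 ≤ ∑ r, XB r := Finset.sum_nonneg fun r _ => hXBn r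
      -- rewrite induction hypotheses
      have ih1' : μ * ∑ r, (XA r)^K ≤ (cst^d * (μ * ∑ r, XA r))^K := by
        have e1 : ((2:ℝ)^m)⁻¹ * ∑ b, (hcN c1 b)^K = μ * ∑ r, (XA r)^K := by
          rw [S3, Finset.mul_sum, Finset.mul_sum, hμd]
          exact Finset.sum_congr rfl fun r _ => by ring
        have e2 : ((2:ℝ)^m)⁻¹ * ∑ b, hcN c1 b = μ * ∑ r, XA r := by
          rw [S4, Finset.mul_sum, Finset.mul_sum, hμd]
          exact Finset.sum_congr rfl fun r _ => by ring
        rw [e1, e2] at ih1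
        calc μ * ∑ r, (XA r)^K ≤ cst^(d*K) * (μ * ∑ r, XA r)^K := ih1
          _ = (cst^d * (μ * ∑ r, XA r))^K := by rw [mul_pow (cst^d), ← pow_mul]
      have ih2' : μ * ∑ r, (cst * XB r)^K ≤ (cst^d * (μ * ∑ r, XB r))^K := by
        have e1 : ((2:ℝ)^m)⁻¹ * ∑ b, (hcN c2 b)^K = μ * ∑ r, (XB r)^K := by
          rw [S5, Finset.mul_sum, Finset.mul_sum, hμd]
          exact Finset.sum_congr rfl fun r _ => by ring
        have e2 : ((2:ℝ)^m)⁻¹ * ∑ b, hcN c2 b = μ * ∑ r, XB r := by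
          rw [S6, Finset.mul_sum, Finset.mul_sum, hμd]
          exact Finset.sum_congr rfl fun r _ => by ring
        rw [e1, e2] at ih2
        have estep : ∑ r, (cst * XB r)^K = cst^K * ∑ r, (XB r)^K := by
          rw [Finset.mul_sum]
          exact Finset.sum_congr rfl fun r _ => by rw [mul_pow]
        calc μ * ∑ r, (cst * XB r)^K = cst^K * (μ * ∑ r, (XB r)^K) := by rw [estep]; ring
          _ ≤ cst^K * (cst^((d-1)*K) * (μ * ∑ r, XB r)^K) :=
              mul_le_mul_of_nonneg_left ih2 (pow_nonneg hcst0 K)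
          _ = cst^(K + (d-1)*K) * (μ * ∑ r, XB r)^K := by rw [← mul_assoc, ← pow_add]
          _ = cst^(d*K) * (μ * ∑ r, XB r)^K := by
              obtain ⟨d', rfl⟩ : ∃ d', d = d' + 1 := ⟨d-1, by omega⟩
              congr 2
              simp only [Nat.add_sub_cancel]
              ring
          _ = (cst^d * (μ * ∑ r, XB r))^K := by rw [mul_pow (cst^d), ← pow_mul]
      have mink := minkowskiPowW K hK XA (fun r => cst * XB r) hXAn
        (fun r => mul_nonneg hcst0 (hXBn r)) hμ0
        (mul_nonneg (pow_nonneg hcst0 d) (mul_nonneg hμ0 hsXA))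
        (mul_nonneg (pow_nonneg hcst0 d) (mul_nonneg hμ0 hsXB)) ih1' ih2'
      calc ((2:ℝ)^m)⁻¹ * ∑ b, (hcN c b)^K
          = ((2:ℝ)^m)⁻¹ * ∑ r, ((∑ i, (A r i + Bv r i)^2)^K + (∑ i, (A r i - Bv r i)^2)^K) := by
            rw [hsum (fun b => (hcN c b)^K)]
            congr 1
            exact Finset.sum_congr rfl fun r _ => by rw [hNt, hNf]
        _ ≤ ((2:ℝ)^m)⁻¹ * ∑ r, 2 * (XA r + cst * XB r)^K := by
            apply mul_le_mul_of_nonneg_left _ (by positivity)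
            apply Finset.sum_le_sum
            intro r _
            have := vecTP K (A r) (Bv r)
            rw [hXA, hXB, hcstd]
            calc (∑ i, (A r i + Bv r i)^2)^K + (∑ i, (A r i - Bv r i)^2)^K
                ≤ 2 * ((∑ i, (A r i)^2) + ((2*K-1:ℕ):ℝ) * (∑ i, (Bv r i)^2))^K := this
              _ = 2 * ((∑ i, (A r i)^2) + ((2*K-1:ℕ):ℝ) * (∑ i, (Bv r i)^2))^K := rfl
        _ = μ * ∑ r, (XA r + cst * XB r)^K := by
            rw [Finset.mul_sum, Finset.mul_sum, hμd]
            exact Finset.sum_congr rfl fun r _ => by ring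
        _ ≤ (cst^d * (μ * ∑ r, XA r) + cst^d * (μ * ∑ r, XB r))^K := mink
        _ = cst^(d*K) * (μ * (∑ r, XA r + ∑ r, XB r))^K := by
            rw [show cst^d * (μ * ∑ r, XA r) + cst^d * (μ * ∑ r, XB r)
                = cst^d * (μ * (∑ r, XA r + ∑ r, XB r)) by ring, mul_pow, ← pow_mul]
        _ = cst^(d*K) * (((2:ℝ)^m)⁻¹ * ∑ b, hcN c b)^K := by
            have hfin : ((2:ℝ)^m)⁻¹ * ∑ b, hcN c b = μ * (∑ r, XA r + ∑ r, XB r) := by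
              rw [S2, show (∑ r : {k : Fin m // k ≠ j} → Bool, 2*(XA r + XB r))
                  = 2 * ∑ r : {k : Fin m // k ≠ j} → Bool, (XA r + XB r) from
                  (Finset.mul_sum _ _ _).symm, Finset.sum_add_distrib, hμd]
              ring
            rw [hfin]
open Matrix

lemma sumPowLe {ι : Type*} [Fintype ι] (f : ι → ℝ) (hf : ∀ i, 0 ≤ f i) (K : ℕ) (hK : 1 ≤ K) :
    ∑ i, (f i)^K ≤ (∑ i, f i)^K := by
  obtain ⟨K', rfl⟩ : ∃ K', K = K' + 1 := ⟨K-1, by omega⟩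
  have hs : 0 ≤ ∑ i, f i := Finset.sum_nonneg fun i _ => hf i
  calc ∑ i, (f i)^(K'+1) = ∑ i, f i * (f i)^K' := by
        exact Finset.sum_congr rfl fun i _ => by ring
    _ ≤ ∑ i, f i * (∑ i', f i')^K' := by
        apply Finset.sum_le_sum
        intro i _
        exact mul_le_mul_of_nonneg_left
          (pow_le_pow_left₀ (hf i) (Finset.single_le_sum (fun i' _ => hf i') (Finset.mem_univ i)) K')
          (hf i)
    _ = (∑ i, f i)^(K'+1) := by rw [← Finset.sum_mul]; ring

lemma tracePowEq (n : ℕ) (P : Matrix (Fin n) (Fin n) ℂ) (hH : P.IsHermitian) (K : ℕ) :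
    ((P^K).trace) = ((∑ i, (hH.eigenvalues i)^K : ℝ) : ℂ) := by
  set V : Matrix (Fin n) (Fin n) ℂ := (Matrix.IsHermitian.eigenvectorUnitary hH : Matrix (Fin n) (Fin n) ℂ) with hV
  set D : Matrix (Fin n) (Fin n) ℂ := Matrix.diagonal (RCLike.ofReal ∘ hH.eigenvalues) with hD
  have hVV : star V * V = 1 := Matrix.mem_unitaryGroup_iff'.mp (Matrix.IsHermitian.eigenvectorUnitary hH).2
  have hVV' : V * star V = 1 := Matrix.mem_unitaryGroup_iff.mp (Matrix.IsHermitian.eigenvectorUnitary hH).2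
  have hspec : P = V * D * star V := Matrix.IsHermitian.spectral_theorem hH
  have hpow : ∀ k : ℕ, (V * D * star V)^k = V * D^k * star V := by
    intro k
    induction k with
    | zero => simp [hVV']
    | succ k ihk =>
      rw [pow_succ, ihk, pow_succ]
      calc V * D ^ k * star V * (V * D * star V)
          = V * D ^ k * (star V * V) * D * star V := by
            simp only [Matrix.mul_assoc]
        _ = V * (D ^ k * D) * star V := by rw [hVV]; simp only [Matrix.mul_assoc, Matrix.one_mul]
  conv_lhs => rw [hspec]
  rw [hpow, Matrix.trace_mul_cycle, hVV, Matrix.one_mul, hD, Matrix.diagonal_pow,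
    Matrix.trace_diagonal]
  push_cast
  apply Finset.sum_congr rfl
  intro i _
  simp [Pi.pow_apply]

open scoped ComplexOrder in
lemma traceBound (n K : ℕ) (hK : 1 ≤ K) (Q : Matrix (Fin n) (Fin n) ℂ) :
    (((Q * Qᴴ)^K).trace).re ≤ (((Q * Qᴴ).trace).re)^K := by
  have hP := Matrix.posSemidef_self_mul_conjTranspose Q
  have hH : (Q * Qᴴ).IsHermitian := hP.isHermitian
  have h1 : ((Q * Qᴴ).trace) = ((∑ i, hH.eigenvalues i : ℝ) : ℂ) := by
    have h := tracePowEq n _ hH 1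
    simpa using h
  rw [tracePowEq n _ hH K, h1, Complex.ofReal_re, Complex.ofReal_re]
  exact sumPowLe _ (fun i => hP.eigenvalues_nonneg i) K hK

/-- Evaluation of the multilinear polynomial `Σ_S Q̂(S) ∏_{i∈S} X_i` on scalar `±1` inputs. -/
noncomputable def ncPolyBool {m n : ℕ} (Qhat : Finset (Fin m) → Matrix (Fin n) (Fin n) ℂ)
    (b : Fin m → Bool) : Matrix (Fin n) (Fin n) ℂ :=
  ∑ S : Finset (Fin m), (∏ i ∈ S, (if b i then (1 : ℂ) else -1)) • Qhat S

/-- **(2K,2) hypercontractivity with Boolean inputs** for degree-`d` matrix-coefficient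
multilinear polynomials: `E Tr|Q(b)|^{2K} ≤ (2K−1)^{dK} (E Tr|Q(b)|²)^K`. -/
theorem boolean_hypercontractivity (m n d K : ℕ) (hK : 1 ≤ K)
    (Qhat : Finset (Fin m) → Matrix (Fin n) (Fin n) ℂ)
    (hdeg : ∀ S : Finset (Fin m), d < S.card → Qhat S = 0) :
    ((2 : ℝ) ^ m)⁻¹ * ∑ b : Fin m → Bool,
        ((ncPolyBool Qhat b * (ncPolyBool Qhat b)ᴴ) ^ K).trace.re
      ≤ ((2 * K - 1 : ℕ) : ℝ) ^ (d * K) *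
        (((2 : ℝ) ^ m)⁻¹ * ∑ b : Fin m → Bool,
          (ncPolyBool Qhat b * (ncPolyBool Qhat b)ᴴ).trace.re) ^ K := by
  set creal : Finset (Fin m) → (Fin n × Fin n × Bool) → ℝ :=
    fun S p => if p.2.2 then (Qhat S p.1 p.2.1).re else (Qhat S p.1 p.2.1).im with hcreal
  have hentry : ∀ (b : Fin m → Bool) (j k : Fin n), ncPolyBool Qhat b j k
      = ∑ S : Finset (Fin m), ((∏ i ∈ S, (if b i then (1:ℝ) else -1) : ℝ) : ℂ) * Qhat S j k := by
    intro b j k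
    unfold ncPolyBool
    rw [Matrix.sum_apply]
    apply Finset.sum_congr rfl
    intro S _
    rw [Matrix.smul_apply, smul_eq_mul]
    congr 1
    rw [Complex.ofReal_prod]
    apply Finset.prod_congr rfl
    intro i _
    by_cases h : b i <;> simp [h]
  have hre : ∀ (b : Fin m → Bool) (j k : Fin n),
      (ncPolyBool Qhat b j k).re = hcF creal b (j,(k,true)) := by
    intro b j k
    rw [hentry, Complex.re_sum]
    unfold hcF hcChi
    apply Finset.sum_congr rfl
    intro S _
    rw [Complex.re_ofReal_mul]
    simp only [hcreal]
    norm_num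
  have him : ∀ (b : Fin m → Bool) (j k : Fin n),
      (ncPolyBool Qhat b j k).im = hcF creal b (j,(k,false)) := by
    intro b j k
    rw [hentry]
    rw [Complex.im_sum]
    unfold hcF hcChi
    apply Finset.sum_congr rfl
    intro S _
    rw [Complex.im_ofReal_mul]
    simp only [hcreal]
    norm_num
  have htr : ∀ b, ((ncPolyBool Qhat b * (ncPolyBool Qhat b)ᴴ).trace).re = hcN creal b := by
    intro b
    have h1 : (ncPolyBool Qhat b * (ncPolyBool Qhat b)ᴴ).trace
        = ∑ j, ∑ k, ncPolyBool Qhat b j k * (starRingEnd ℂ) (ncPolyBool Qhat b j k) := by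
      rw [Matrix.trace]
      apply Finset.sum_congr rfl
      intro j _
      rw [Matrix.diag_apply, Matrix.mul_apply]
      apply Finset.sum_congr rfl
      intro k _
      rw [Matrix.conjTranspose_apply]
      rfl
    rw [h1, Complex.re_sum]
    unfold hcN
    rw [Fintype.sum_prod_type]
    apply Finset.sum_congr rfl
    intro j _
    rw [Complex.re_sum, Fintype.sum_prod_type]
    apply Finset.sum_congr rfl
    intro k _
    rw [Fintype.sum_bool, ← hre b j k, ← him b j k, Complex.mul_conj, Complex.ofReal_re,
      Complex.normSq_apply]
    ring
  have hdegR : ∀ S : Finset (Fin m), d < S.card → creal S = 0 := by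
    intro S h
    funext p
    simp [hcreal, hdeg S h]
  have hsuppR : ∀ S : Finset (Fin m), ¬ S ⊆ (Finset.univ : Finset (Fin m)) → creal S = 0 :=
    fun S h => absurd (Finset.subset_univ S) h
  have main := hcMain m K hK Finset.univ d creal hsuppR hdegR
  calc ((2 : ℝ) ^ m)⁻¹ * ∑ b : Fin m → Bool,
        ((ncPolyBool Qhat b * (ncPolyBool Qhat b)ᴴ) ^ K).trace.re
      ≤ ((2 : ℝ) ^ m)⁻¹ * ∑ b : Fin m → Bool, (hcN creal b)^K := by
        apply mul_le_mul_of_nonneg_left _ (by positivity)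
        apply Finset.sum_le_sum
        intro b _
        calc ((ncPolyBool Qhat b * (ncPolyBool Qhat b)ᴴ) ^ K).trace.re
            ≤ (((ncPolyBool Qhat b * (ncPolyBool Qhat b)ᴴ).trace).re)^K :=
              traceBound n K hK (ncPolyBool Qhat b)
          _ = (hcN creal b)^K := by rw [htr b]
    _ ≤ ((2 * K - 1 : ℕ) : ℝ) ^ (d * K) *
        (((2 : ℝ) ^ m)⁻¹ * ∑ b : Fin m → Bool, hcN creal b) ^ K := main
    _ = ((2 * K - 1 : ℕ) : ℝ) ^ (d * K) *
        (((2 : ℝ) ^ m)⁻¹ * ∑ b : Fin m → Bool,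
          (ncPolyBool Qhat b * (ncPolyBool Qhat b)ᴴ).trace.re) ^ K := by
        have hss : (∑ b : Fin m → Bool, hcN creal b)
            = ∑ b : Fin m → Bool, (ncPolyBool Qhat b * (ncPolyBool Qhat b)ᴴ).trace.re :=
          Finset.sum_congr rfl fun b _ => (htr b).symm
        rw [hss]
end
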